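/- Let (V,⟨·,·⟩,J) be a 4-dimensional para/pseudo-Hermitian vector space with Kähler form Ω(x,y) := ⟨x,Jy⟩. Define Ξ(Ω)(x,y,z,w) := 2Ω(x,y)⟨z,w⟩ + Ω(x,z)⟨y,w⟩ - Ω(y,z)⟨x,w⟩ - Ω(x,w)⟨y,z⟩ + Ω(y,w)⟨x,z⟩. Then Ξ(Ω) does not satisfy the Kähler identity: there exist x,y,z,w with Ξ(Ω)(x,y,Jz,Jw) ≠ ∓Ξ(Ω)(x,y,z,w). -/
import Mathlib


noncomputable section

abbrev V4 := EuclideanSpace ℝ (Fin 4)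

/-- The standard basis of `ℝ⁴`. -/
def bb (i : Fin 4) : V4 := EuclideanSpace.single i (1 : ℝ)

/-- The canonical (para)-complex structure: `Je₁ = e₂, Je₂ = εe₁, Je₃ = e₄, Je₄ = εe₃`. -/
def J13 (ε : ℝ) (v : V4) : V4 :=
  (ε * v 1) • bb 0 + v 0 • bb 1 + (ε * v 3) • bb 2 + v 2 • bb 3

/-- A diagonal inner product on `ℝ⁴`. -/
def B13 (c : Fin 4 → ℝ) (v w : V4) : ℝ := ∑ i, c i * v i * w i

/-- The Kähler form `Ω(x,y) = ⟨x,Jy⟩`. -/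
def Om13 (ε : ℝ) (c : Fin 4 → ℝ) (v w : V4) : ℝ := B13 c v (J13 ε w)

/-- `Ξ(Ω)(x,y,z,w) := 2Ω(x,y)⟨z,w⟩ + Ω(x,z)⟨y,w⟩ - Ω(y,z)⟨x,w⟩ - Ω(x,w)⟨y,z⟩ + Ω(y,w)⟨x,z⟩`. -/
def Xi13 (ε : ℝ) (c : Fin 4 → ℝ) (x y z w : V4) : ℝ :=
  2 * Om13 ε c x y * B13 c z w + Om13 ε c x z * B13 c y w - Om13 ε c y z * B13 c x w
    - Om13 ε c x w * B13 c y z + Om13 ε c y w * B13 c x z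


lemma bb_apply (i j : Fin 4) : bb i j = if j = i then 1 else 0 :=
  EuclideanSpace.single_apply i 1 j

lemma B13_eval (c : Fin 4 → ℝ) (v w : V4) :
    B13 c v w = c 0 * v 0 * w 0 + c 1 * v 1 * w 1 + c 2 * v 2 * w 2 + c 3 * v 3 * w 3 := by
  simp [B13, Fin.sum_univ_four]

lemma J13_apply0 (ε : ℝ) (v : V4) : J13 ε v 0 = ε * v 1 := by
  simp [J13, bb, EuclideanSpace.single_apply]

lemma J13_apply1 (ε : ℝ) (v : V4) : J13 ε v 1 = v 0 := by
  simp [J13, bb, EuclideanSpace.single_apply]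

lemma J13_apply2 (ε : ℝ) (v : V4) : J13 ε v 2 = ε * v 3 := by
  simp [J13, bb, EuclideanSpace.single_apply]

lemma J13_apply3 (ε : ℝ) (v : V4) : J13 ε v 3 = v 2 := by
  simp [J13, bb, EuclideanSpace.single_apply]

set_option maxHeartbeats 1600000 in
/-- on a 4-dimensional para/pseudo-Hermitian vector space, `Ξ(Ω)` does
not satisfy the Kähler identity `A(x,y,Jz,Jw) = -ε A(x,y,z,w)`. -/
theorem statement13 (ε : ℝ) (hε : ε = 1 ∨ ε = -1)
    (c : Fin 4 → ℝ) (hc : ∀ i, c i ≠ 0)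
    (hJB : ∀ v w, B13 c (J13 ε v) (J13 ε w) = -ε * B13 c v w) :
    ∃ x y z w : V4, Xi13 ε c x y (J13 ε z) (J13 ε w) ≠ -ε * Xi13 ε c x y z w := by
  have hε2 : ε * ε = 1 := by rcases hε with h | h <;> subst h <;> norm_num
  have h1 := hJB (bb 0) (bb 0)
  have h3 := hJB (bb 2) (bb 2)
  simp only [B13_eval, J13_apply0, J13_apply1, J13_apply2, J13_apply3, bb_apply, Fin.reduceEq, reduceIte] at h1 h3
  norm_num at h1 h3
  refine ⟨bb 0, bb 2, bb 0, bb 3, fun h => ?_⟩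
  simp only [Xi13, Om13, B13_eval, J13_apply0, J13_apply1, J13_apply2, J13_apply3,
    bb_apply, Fin.reduceEq, reduceIte] at h
  norm_num at h
  have h02 : c 0 * c 2 ≠ 0 := mul_ne_zero (hc 0) (hc 2)
  apply h02
  nlinarith [h, hε2]
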